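/- arXiv:2502.13939 — 10 statements merged into one kernel-verified Lean document; each statement's English description precedes it below -/
import Mathlib

section
/- Let G be a finite connected graph with largest adjacency eigenvalue λ_G. Then Γ_G ≥ λ_G + 1, where Γ_G is the ratio ‖x‖₁²/‖x‖₂² for the Perron vector x of G. -/
open Finset Matrix

/-- For a finite connected graph `G` with largest adjacency eigenvalue `lam`
(witnessed by the positive Perron eigenvector `x`), the ratio
`Γ_G = ‖x‖₁²/‖x‖₂²` satisfies `Γ_G ≥ lam + 1`. -/
theorem stmt1 {V : Type*} [Fintype V] [DecidableEq V] (G : SimpleGraph V)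
    [DecidableRel G.Adj] (hG : G.Connected) (x : V → ℝ) (hx : ∀ v, 0 < x v)
    (lam : ℝ) (heig : G.adjMatrix ℝ *ᵥ x = lam • x) :
    (∑ v, x v) ^ 2 / (∑ v, x v ^ 2) ≥ lam + 1 := by
  have hne : Nonempty V := hG.nonempty
  have hS : 0 < ∑ v, x v ^ 2 :=
    Finset.sum_pos (fun v _ => pow_pos (hx v) 2) Finset.univ_nonempty
  rw [ge_iff_le, le_div_iff₀ hS]
  have hkey : ∀ v, lam * x v ^ 2 + x v ^ 2 ≤ x v * ∑ u, x u := by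
    intro v
    have hAv : (G.adjMatrix ℝ *ᵥ x) v = lam * x v := by
      rw [heig]; simp
    have h1 : (G.adjMatrix ℝ *ᵥ x) v ≤ ∑ u ∈ Finset.univ.erase v, x u := by
      rw [SimpleGraph.adjMatrix_mulVec_apply]
      refine Finset.sum_le_sum_of_subset_of_nonneg ?_ (fun u _ _ => (hx u).le)
      intro u hu
      exact Finset.mem_erase.2 ⟨((SimpleGraph.mem_neighborFinset G v u).mp hu).ne',
        Finset.mem_univ u⟩
    have h2 : ∑ u ∈ Finset.univ.erase v, x u = (∑ u, x u) - x v :=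
      Finset.sum_erase_eq_sub (Finset.mem_univ v)
    rw [hAv, h2] at h1
    have := mul_le_mul_of_nonneg_left h1 (hx v).le
    nlinarith [hx v]
  have hsum : ∑ v, (lam * x v ^ 2 + x v ^ 2) ≤ ∑ v, x v * ∑ u, x u :=
    Finset.sum_le_sum (fun v _ => hkey v)
  have hL : ∑ v, (lam * x v ^ 2 + x v ^ 2) = (lam + 1) * ∑ v, x v ^ 2 := by
    rw [Finset.sum_add_distrib, ← Finset.mul_sum]; ring
  have hR : ∑ v, x v * ∑ u, x u = (∑ v, x v) ^ 2 := by
    rw [← Finset.sum_mul]; ring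
  linarith [hsum, hL ▸ hsum]
end

section
/- Let x₁ and x₂ be two vectors in ℝⁿ with all positive entries and let α ∈ (0,1). Then Γ(α·x₁ + (1−α)·x₂) ≥ min(Γ(x₁), Γ(x₂)), where Γ(y) = ‖y‖₁²/‖y‖₂². -/
open Finset

/-- For positive vectors `x₁, x₂ ∈ ℝⁿ` and `α ∈ (0,1)`,
`Γ(α·x₁ + (1−α)·x₂) ≥ min (Γ x₁) (Γ x₂)` where `Γ y = ‖y‖₁²/‖y‖₂²`. -/
theorem stmt2 {n : ℕ} (x₁ x₂ : Fin n → ℝ) (h1 : ∀ i, 0 < x₁ i)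
    (h2 : ∀ i, 0 < x₂ i) (α : ℝ) (hα : α ∈ Set.Ioo (0 : ℝ) 1) :
    (∑ i, |α * x₁ i + (1 - α) * x₂ i|) ^ 2 /
        (∑ i, (α * x₁ i + (1 - α) * x₂ i) ^ 2) ≥
      min ((∑ i, |x₁ i|) ^ 2 / (∑ i, x₁ i ^ 2))
        ((∑ i, |x₂ i|) ^ 2 / (∑ i, x₂ i ^ 2)) := by
  obtain ⟨hα0, hα1⟩ := hα
  rcases Nat.eq_zero_or_pos n with hn | hn
  · subst hn; simp
  have hne : (Finset.univ : Finset (Fin n)).Nonempty := Finset.univ_nonempty_iff.mpr ⟨⟨0, hn⟩⟩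
  have hcpos : ∀ i, 0 < α * x₁ i + (1 - α) * x₂ i := fun i => by
    have := h1 i; have := h2 i; nlinarith
  have habs1 : ∀ i, |x₁ i| = x₁ i := fun i => abs_of_pos (h1 i)
  have habs2 : ∀ i, |x₂ i| = x₂ i := fun i => abs_of_pos (h2 i)
  have habsc : ∀ i, |α * x₁ i + (1 - α) * x₂ i| = α * x₁ i + (1 - α) * x₂ i :=
    fun i => abs_of_pos (hcpos i)
  simp only [habs1, habs2, habsc]
  set S1 := ∑ i, x₁ i with hS1
  set S2 := ∑ i, x₂ i with hS2
  set Q1 := ∑ i, x₁ i ^ 2 with hQ1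
  set Q2 := ∑ i, x₂ i ^ 2 with hQ2
  set P := ∑ i, x₁ i * x₂ i with hP
  have hS1pos : 0 < S1 := Finset.sum_pos (fun i _ => h1 i) hne
  have hS2pos : 0 < S2 := Finset.sum_pos (fun i _ => h2 i) hne
  have hQ1pos : 0 < Q1 := Finset.sum_pos (fun i _ => pow_pos (h1 i) 2) hne
  have hQ2pos : 0 < Q2 := Finset.sum_pos (fun i _ => pow_pos (h2 i) 2) hne
  have hSsum : ∑ i, (α * x₁ i + (1 - α) * x₂ i) = α * S1 + (1 - α) * S2 := by
    rw [hS1, hS2, Finset.mul_sum, Finset.mul_sum, ← Finset.sum_add_distrib]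
  have hQsum : ∑ i, (α * x₁ i + (1 - α) * x₂ i) ^ 2
      = α ^ 2 * Q1 + 2 * α * (1 - α) * P + (1 - α) ^ 2 * Q2 := by
    rw [hQ1, hQ2, hP, Finset.mul_sum, Finset.mul_sum, Finset.mul_sum,
      ← Finset.sum_add_distrib, ← Finset.sum_add_distrib]
    exact Finset.sum_congr rfl fun i _ => by ring
  have hQcpos : 0 < ∑ i, (α * x₁ i + (1 - α) * x₂ i) ^ 2 :=
    Finset.sum_pos (fun i _ => pow_pos (hcpos i) 2) hne
  rw [hSsum, hQsum]
  rw [hQsum] at hQcpos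
  set m := min (S1 ^ 2 / Q1) (S2 ^ 2 / Q2) with hm
  have hm0 : 0 ≤ m := le_min (by positivity) (by positivity)
  have hm1 : m * Q1 ≤ S1 ^ 2 := by
    have := min_le_left (S1 ^ 2 / Q1) (S2 ^ 2 / Q2)
    rw [← hm] at this
    exact (le_div_iff₀ hQ1pos).mp this
  have hm2 : m * Q2 ≤ S2 ^ 2 := by
    have := min_le_right (S1 ^ 2 / Q1) (S2 ^ 2 / Q2)
    rw [← hm] at this
    exact (le_div_iff₀ hQ2pos).mp this
  have hPpos : 0 < P := Finset.sum_pos (fun i _ => mul_pos (h1 i) (h2 i)) hne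
  have hCS : P ^ 2 ≤ Q1 * Q2 := Finset.sum_mul_sq_le_sq_mul_sq Finset.univ x₁ x₂
  have hmP : m * P ≤ S1 * S2 := by
    have ha : m * m * P ^ 2 ≤ m * m * (Q1 * Q2) :=
      mul_le_mul_of_nonneg_left hCS (mul_nonneg hm0 hm0)
    have hb : m * Q1 * (m * Q2) ≤ S1 ^ 2 * S2 ^ 2 :=
      mul_le_mul hm1 hm2 (mul_nonneg hm0 hQ2pos.le) (sq_nonneg S1)
    have hsq : (m * P) ^ 2 ≤ (S1 * S2) ^ 2 := by nlinarith
    have h1' : 0 ≤ m * P := mul_nonneg hm0 hPpos.le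
    have h2' : 0 ≤ S1 * S2 := by positivity
    exact (pow_le_pow_iff_left₀ h1' h2' two_ne_zero).mp hsq
  rw [ge_iff_le, le_div_iff₀ hQcpos]
  nlinarith [sq_nonneg (S1 - S2), mul_pos hα0 (by linarith : (0:ℝ) < 1 - α)]
end

section
/- Suppose real numbers x₁,…,x_k satisfy m ≤ xᵢ ≤ M for all i, with 0 < m ≤ M, and Σᵢ xᵢ = S. Then (Σᵢ xᵢ)² / (Σᵢ xᵢ²) ≥ S² / ((m+M)·S − k·m·M). -/
open Finset

/-- If `m ≤ xᵢ ≤ M` with `0 < m ≤ M` and `S = Σ xᵢ`, then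
`(Σ xᵢ)² / (Σ xᵢ²) ≥ S² / ((m+M)S − k·m·M)`. -/
theorem stmt3 {k : ℕ} (x : Fin k → ℝ) (m M S : ℝ) (hm : 0 < m) (hmM : m ≤ M)
    (hlb : ∀ i, m ≤ x i) (hub : ∀ i, x i ≤ M) (hS : S = ∑ i, x i) :
    (∑ i, x i) ^ 2 / (∑ i, x i ^ 2) ≥
      S ^ 2 / ((m + M) * S - (k : ℝ) * m * M) := by
  rcases Nat.eq_zero_or_pos k with hk | hk
  · subst hk; simp [hS]
  · have hx2pos : 0 < ∑ i, x i ^ 2 := by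
      apply Finset.sum_pos
      · intro i _
        exact pow_pos (hm.trans_le (hlb i)) 2
      · exact Finset.univ_nonempty_iff.mpr (Fin.pos_iff_nonempty.mp hk)
    have hle : ∑ i, x i ^ 2 ≤ (m + M) * S - (k : ℝ) * m * M := by
      have key : ∀ i, x i ^ 2 ≤ (m + M) * x i - m * M := by
        intro i
        nlinarith [mul_nonneg (sub_nonneg.mpr (hub i)) (sub_nonneg.mpr (hlb i))]
      calc ∑ i, x i ^ 2 ≤ ∑ i, ((m + M) * x i - m * M) :=
            Finset.sum_le_sum fun i _ => key i
        _ = (m + M) * S - (k : ℝ) * m * M := by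
            rw [Finset.sum_sub_distrib, ← Finset.mul_sum, ← hS]
            simp; ring
    rw [← hS]
    exact div_le_div_of_nonneg_left (sq_nonneg S) hx2pos hle
end

section
/- Let x = (x₀, x₁, x₂, …) be a vector (finitely supported or ℓ¹) with nonnegative entries, and let 0 < ε ≤ x₀. Define x' = (x₀−ε, x₁, x₂, …). If x₀ < (Σᵢ xᵢ²)/(Σᵢ xᵢ), then Γ(x') < Γ(x), where Γ(y) = (Σᵢ yᵢ)²/(Σᵢ yᵢ²). -/
lemma aux_tsum_sub (g : ℕ → ℝ) (hg : Summable g) (c : ℝ) :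
    ∑' i, (g i - if i = 0 then c else 0) = (∑' i, g i) - c := by
  have h2 : Summable (fun i => if i = (0:ℕ) then c else 0) :=
    summable_of_ne_finset_zero (s := {0}) (by intro i hi; simp at hi; simp [hi])
  rw [Summable.tsum_sub hg h2, tsum_ite_eq]

/-- Perturbation lemma: decreasing the first coordinate of a nonnegative summable
vector by `ε ∈ (0, x₀]` strictly decreases `Γ(y) = (Σ yᵢ)²/(Σ yᵢ²)`, provided
`x₀ < (Σ xᵢ²)/(Σ xᵢ)`. -/
theorem stmt4 (x : ℕ → ℝ) (hx : ∀ i, 0 ≤ x i) (hsum : Summable x)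
    (hsq : Summable fun i => x i ^ 2) (hpos : 0 < ∑' i, x i ^ 2)
    (ε : ℝ) (hε : 0 < ε) (hεx : ε ≤ x 0)
    (hcond : x 0 < (∑' i, x i ^ 2) / (∑' i, x i)) :
    (∑' i, Function.update x 0 (x 0 - ε) i) ^ 2 /
        (∑' i, Function.update x 0 (x 0 - ε) i ^ 2) <
      (∑' i, x i) ^ 2 / (∑' i, x i ^ 2) := by
  set S := ∑' i, x i with hS
  set Q := ∑' i, x i ^ 2 with hQ
  -- S ≥ x 0 > 0
  have hx0S : x 0 ≤ S := Summable.le_tsum hsum 0 (fun i _ => hx i)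
  have hSpos : 0 < S := lt_of_lt_of_le (lt_of_lt_of_le hε hεx) hx0S
  -- rewrite the two perturbed sums
  have e1 : (fun i => Function.update x 0 (x 0 - ε) i)
      = fun i => x i - if i = 0 then ε else 0 := by
    funext i
    rcases eq_or_ne i 0 with h | h
    · subst h; rw [Function.update_self]; simp
    · rw [Function.update_of_ne h]; simp [h]
  have e2 : (fun i => Function.update x 0 (x 0 - ε) i ^ 2)
      = fun i => x i ^ 2 - if i = 0 then x 0 ^ 2 - (x 0 - ε) ^ 2 else 0 := by
    funext i
    rcases eq_or_ne i 0 with h | h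
    · subst h; rw [Function.update_self, if_pos rfl]; ring
    · rw [Function.update_of_ne h]; simp [h]
  have hsum1 : ∑' i, Function.update x 0 (x 0 - ε) i = S - ε := by
    rw [show (∑' i, Function.update x 0 (x 0 - ε) i)
        = ∑' i, (x i - if i = 0 then ε else 0) from by rw [← e1],
      aux_tsum_sub x hsum ε]
  have hsum2 : ∑' i, Function.update x 0 (x 0 - ε) i ^ 2
      = Q - (x 0 ^ 2 - (x 0 - ε) ^ 2) := by
    rw [show (∑' i, Function.update x 0 (x 0 - ε) i ^ 2)
        = ∑' i, (x i ^ 2 - if i = 0 then x 0 ^ 2 - (x 0 - ε) ^ 2 else 0) from by rw [← e2],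
      aux_tsum_sub _ hsq _]
  rw [hsum1, hsum2]
  -- key facts
  have hcond' : x 0 * S < Q := by
    have := (lt_div_iff₀ hSpos).mp hcond
    linarith
  have hQS : Q ≤ S ^ 2 := by
    have h1 : ∀ i, x i ^ 2 ≤ x i * S := fun i => by
      have := Summable.le_tsum hsum i (fun j _ => hx j)
      nlinarith [hx i]
    calc Q ≤ ∑' i, x i * S := Summable.tsum_le_tsum h1 hsq (hsum.mul_right S)
      _ = S * S := by rw [tsum_mul_right]
      _ = S ^ 2 := by ring
  -- Q' = Q - (x0² - (x0-ε)²) nonneg as sum of squares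
  have hQ'nonneg : 0 ≤ Q - (x 0 ^ 2 - (x 0 - ε) ^ 2) := by
    rw [← hsum2]
    exact tsum_nonneg (fun i => sq_nonneg _)
  rcases eq_or_lt_of_le hQ'nonneg with h0 | hQ'pos
  · rw [← h0, div_zero]
    positivity
  · rw [div_lt_div_iff₀ hQ'pos hpos]
    nlinarith [mul_pos (mul_pos hε hSpos) (sub_pos.mpr hcond'), sq_nonneg ε,
      mul_nonneg (sq_nonneg ε) (sub_nonneg.mpr hQS)]
end

section
/- For the path graph P_n on n vertices, Γ_{P_n} = (2/(n+1)) · (sin(π/(n+1)) / (1 − cos(π/(n+1))))², where Γ denotes the ratio ‖x‖₁²/‖x‖₂² for the Perron vector x. -/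
open Finset Matrix Real

/-- Extend a vector on `Fin n` to `ℕ` by zero. -/
noncomputable def pext {n : ℕ} (v : Fin n → ℝ) (k : ℕ) : ℝ := if h : k < n then v ⟨k, h⟩ else 0

lemma sum_ite_val {n : ℕ} (v : Fin n → ℝ) (m : ℕ) :
    ∑ j : Fin n, (if (j : ℕ) = m then v j else 0) = pext v m := by
  by_cases h : m < n
  · rw [pext, dif_pos h]
    rw [show (∑ j : Fin n, (if (j : ℕ) = m then v j else 0))
        = ∑ j : Fin n, (if j = ⟨m, h⟩ then v j else 0) from
      Finset.sum_congr rfl (by intro j _; congr 1; simp [Fin.ext_iff])]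
    simp
  · rw [pext, dif_neg h]
    apply Finset.sum_eq_zero
    intro j _
    rw [if_neg]
    omega

open scoped Classical in
lemma path_mulVec {n : ℕ} (v : Fin n → ℝ) (i : Fin n) :
    ((SimpleGraph.pathGraph n).adjMatrix ℝ *ᵥ v) i =
      pext v ((i : ℕ) + 1) + (if (i : ℕ) = 0 then 0 else pext v ((i : ℕ) - 1)) := by
  classical
  rw [SimpleGraph.adjMatrix_mulVec_apply, SimpleGraph.neighborFinset_eq_filter, Finset.sum_filter]
  have key : ∀ j : Fin n, (if (SimpleGraph.pathGraph n).Adj i j then v j else 0)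
      = (if (j : ℕ) = (i : ℕ) + 1 then v j else 0)
        + (if (j : ℕ) + 1 = (i : ℕ) then v j else 0) := by
    intro j
    rw [SimpleGraph.pathGraph_adj]
    split_ifs with h1 h2 h3 h2 h3 h3 <;> (first | (exfalso; omega) | ring1)
  rw [Finset.sum_congr rfl (fun j _ => key j), Finset.sum_add_distrib, sum_ite_val]
  congr 1
  by_cases hi : (i : ℕ) = 0
  · rw [if_pos hi]
    apply Finset.sum_eq_zero; intro j _; rw [if_neg]; omega
  · rw [if_neg hi]
    rw [show (∑ j : Fin n, (if (j:ℕ) + 1 = (i:ℕ) then v j else 0))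
        = ∑ j : Fin n, (if (j:ℕ) = (i:ℕ) - 1 then v j else 0) from
      Finset.sum_congr rfl (by intro j _; congr 1; simp; omega)]
    exact sum_ite_val v _

lemma tele_sin (θ : ℝ) (n : ℕ) :
    2 * Real.sin (θ/2) * ∑ k ∈ Finset.range n, Real.sin ((k+1) * θ)
      = Real.cos (θ/2) - Real.cos ((2*n+1)*θ/2) := by
  set f : ℕ → ℝ := fun m => Real.cos ((2*(m:ℝ)+1)*θ/2) with hf
  have key : ∀ k : ℕ, 2 * Real.sin (θ/2) * Real.sin (((k:ℝ)+1) * θ) = f k - f (k+1) := by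
    intro k
    rw [hf]
    simp only
    push_cast
    have e1 : ((2*(k:ℝ)+1)*θ/2 + (2*((k:ℝ)+1)+1)*θ/2)/2 = ((k:ℝ)+1)*θ := by ring
    have e2 : ((2*(k:ℝ)+1)*θ/2 - (2*((k:ℝ)+1)+1)*θ/2)/2 = -(θ/2) := by ring
    rw [Real.cos_sub_cos, e1, e2, Real.sin_neg]
    ring
  rw [Finset.mul_sum, Finset.sum_congr rfl (fun k _ => key k), Finset.sum_range_sub' f n, hf]
  norm_num

lemma tele_cos (θ : ℝ) (n : ℕ) :
    2 * Real.sin θ * ∑ k ∈ Finset.range n, Real.cos ((2*(k:ℝ)+2) * θ)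
      = Real.sin ((2*n+1)*θ) - Real.sin θ := by
  set f : ℕ → ℝ := fun m => Real.sin ((2*(m:ℝ)+1)*θ) with hf
  have key : ∀ k : ℕ, 2 * Real.sin θ * Real.cos ((2*(k:ℝ)+2) * θ) = f (k+1) - f k := by
    intro k
    rw [hf]
    simp only
    push_cast
    have e1 : ((2*((k:ℝ)+1)+1)*θ - (2*(k:ℝ)+1)*θ)/2 = θ := by ring
    have e2 : ((2*((k:ℝ)+1)+1)*θ + (2*(k:ℝ)+1)*θ)/2 = (2*(k:ℝ)+2)*θ := by ring
    rw [Real.sin_sub_sin, e1, e2]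
    try ring
  rw [Finset.mul_sum, Finset.sum_congr rfl (fun k _ => key k), Finset.sum_range_sub f n, hf]
  norm_num

lemma sum_sin_eq (n : ℕ) (hn : 1 ≤ n) :
    ∑ k ∈ Finset.range n, Real.sin (((k:ℝ)+1) * (π/((n:ℝ)+1)))
      = Real.cos (π/((n:ℝ)+1)/2) / Real.sin (π/((n:ℝ)+1)/2) := by
  set θ : ℝ := π/((n:ℝ)+1) with hθ
  have hn1 : (0:ℝ) < (n:ℝ) + 1 := by positivity
  have hθpos : 0 < θ := by rw [hθ]; positivity
  have hθlt : θ < π := by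
    rw [hθ]
    rw [div_lt_iff₀ hn1]
    have : (1:ℝ) ≤ (n:ℝ) := by exact_mod_cast hn
    nlinarith [Real.pi_pos]
  have hs2 : 0 < Real.sin (θ/2) :=
    Real.sin_pos_of_pos_of_lt_pi (by linarith) (by linarith)
  have h := tele_sin θ n
  have harg : (2*(n:ℝ)+1)*θ/2 = π - θ/2 := by
    rw [hθ]; field_simp; ring
  rw [harg, Real.cos_pi_sub] at h
  field_simp
  linarith

lemma sum_sin_sq_eq (n : ℕ) (hn : 1 ≤ n) :
    ∑ k ∈ Finset.range n, Real.sin (((k:ℝ)+1) * (π/((n:ℝ)+1))) ^ 2 = ((n:ℝ)+1)/2 := by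
  set θ : ℝ := π/((n:ℝ)+1) with hθ
  have hn1 : (0:ℝ) < (n:ℝ) + 1 := by positivity
  have hθpos : 0 < θ := by rw [hθ]; positivity
  have hθlt : θ < π := by
    rw [hθ]
    rw [div_lt_iff₀ hn1]
    have : (1:ℝ) ≤ (n:ℝ) := by exact_mod_cast hn
    nlinarith [Real.pi_pos]
  have hs : 0 < Real.sin θ := Real.sin_pos_of_pos_of_lt_pi hθpos hθlt
  have h := tele_cos θ n
  have harg : (2*(n:ℝ)+1)*θ = 2*π - θ := by
    rw [hθ]; field_simp; ring
  have hsin : Real.sin ((2*(n:ℝ)+1)*θ) = - Real.sin θ := by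
    rw [harg, Real.sin_sub, Real.sin_two_pi, Real.cos_two_pi]; ring
  rw [hsin] at h
  have hC : ∑ k ∈ Finset.range n, Real.cos ((2*(k:ℝ)+2) * θ) = -1 := by
    have h2 : 2 * Real.sin θ * ∑ k ∈ Finset.range n, Real.cos ((2*(k:ℝ)+2) * θ)
        = 2 * Real.sin θ * (-1) := by rw [h]; ring
    exact mul_left_cancel₀ (by positivity) h2
  have hsq : ∀ k ∈ Finset.range n, Real.sin (((k:ℝ)+1) * θ) ^ 2
      = 1/2 - Real.cos ((2*(k:ℝ)+2) * θ)/2 := by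
    intro k _
    rw [Real.sin_sq_eq_half_sub, show 2*(((k:ℝ)+1)*θ) = (2*(k:ℝ)+2)*θ from by ring]
  rw [Finset.sum_congr rfl hsq, Finset.sum_sub_distrib, Finset.sum_const, Finset.card_range]
  rw [← Finset.sum_div, hC]
  push_cast
  ring

lemma sin_add_sin (b θ : ℝ) : Real.sin (b + θ) + Real.sin (b - θ) = 2 * Real.sin b * Real.cos θ := by
  rw [Real.sin_add, Real.sin_sub]; ring

open scoped Classical in
lemma y_eig (n : ℕ) (hn : 1 ≤ n) :
    (SimpleGraph.pathGraph n).adjMatrix ℝ *ᵥ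
        (fun i : Fin n => Real.sin ((((i:ℕ):ℝ)+1) * (π/((n:ℝ)+1))))
      = (2 * Real.cos (π/((n:ℝ)+1))) •
        (fun i : Fin n => Real.sin ((((i:ℕ):ℝ)+1) * (π/((n:ℝ)+1)))) := by
  set θ : ℝ := π/((n:ℝ)+1) with hθ
  set y : Fin n → ℝ := fun i => Real.sin ((((i:ℕ):ℝ)+1) * θ) with hy
  have hn1 : (0:ℝ) < (n:ℝ) + 1 := by positivity
  have hpext : ∀ m : ℕ, m ≤ n → pext y m = Real.sin (((m:ℝ)+1) * θ) := by
    intro m hm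
    by_cases h : m < n
    · rw [pext, dif_pos h]
    · have hmn : m = n := by omega
      rw [pext, dif_neg h, hmn]
      have : ((n:ℝ)+1) * θ = π := by rw [hθ]; field_simp
      rw [this, Real.sin_pi]
  funext i
  rw [path_mulVec]
  rcases Nat.eq_zero_or_eq_succ_pred (i : ℕ) with h0 | hsucc
  · rw [if_pos h0]
    simp only [h0, Nat.zero_add]
    rw [hpext 1 hn]
    simp only [Pi.smul_apply, hy, h0, smul_eq_mul]
    push_cast
    rw [show ((1:ℝ)+1)*θ = 2*θ from by ring, Real.sin_two_mul]
    ring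
  · set k := (i : ℕ) - 1 with hk
    have hik : (i : ℕ) = k + 1 := hsucc
    have hkn : k + 1 < n := by omega
    rw [if_neg (by omega), hik]
    rw [hpext (k+1+1) (by omega), hpext k (by omega)]
    simp only [Pi.smul_apply, hy, hik, smul_eq_mul]
    push_cast
    have := _root_.sin_add_sin (((k:ℝ)+2) * θ) θ
    have e1 : ((k:ℝ)+2)*θ + θ = ((k:ℝ)+1+1+1)*θ := by ring
    have e2 : ((k:ℝ)+2)*θ - θ = ((k:ℝ)+1)*θ := by ring
    rw [e1, e2] at this
    rw [show ((k:ℝ)+1+1)*θ = ((k:ℝ)+2)*θ from by ring]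
    linarith [this]

open scoped Classical in
/-- For the path graph `P_n` with positive (Perron) eigenvector `x`,
`Γ_{P_n} = (2/(n+1)) · (sin(π/(n+1)) / (1 − cos(π/(n+1))))²`. -/
theorem stmt10 (n : ℕ) (hn : 1 ≤ n) (x : Fin n → ℝ) (hx : ∀ i, 0 < x i)
    (lam : ℝ) (heig : (SimpleGraph.pathGraph n).adjMatrix ℝ *ᵥ x = lam • x) :
    (∑ i, x i) ^ 2 / (∑ i, x i ^ 2) =
      (2 / ((n : ℝ) + 1)) *
        (Real.sin (π / ((n : ℝ) + 1)) / (1 - Real.cos (π / ((n : ℝ) + 1)))) ^ 2 := by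
  set θ : ℝ := π/((n:ℝ)+1) with hθ
  have hn1 : (0:ℝ) < (n:ℝ) + 1 := by positivity
  have hθpos : 0 < θ := by rw [hθ]; positivity
  have hθlt : θ < π := by
    rw [hθ, div_lt_iff₀ hn1]
    have : (1:ℝ) ≤ (n:ℝ) := by exact_mod_cast hn
    nlinarith [Real.pi_pos]
  have hsθ : 0 < Real.sin θ := Real.sin_pos_of_pos_of_lt_pi hθpos hθlt
  have hs2 : 0 < Real.sin (θ/2) :=
    Real.sin_pos_of_pos_of_lt_pi (by linarith) (by linarith)
  have hc2 : 0 < Real.cos (θ/2) :=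
    Real.cos_pos_of_mem_Ioo ⟨by linarith [Real.pi_pos], by linarith [Real.pi_pos]⟩
  set y : Fin n → ℝ := fun i => Real.sin ((((i:ℕ):ℝ)+1) * θ) with hy
  have hy_pos : ∀ i : Fin n, 0 < y i := by
    intro i
    apply Real.sin_pos_of_pos_of_lt_pi
    · positivity
    · have hi : ((i:ℕ):ℝ) + 1 ≤ (n:ℝ) := by
        have := i.2; exact_mod_cast Nat.succ_le_of_lt this
      calc ((((i:ℕ):ℝ))+1) * θ ≤ (n:ℝ) * θ := by nlinarith
        _ < ((n:ℝ)+1) * θ := by nlinarith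
        _ = π := by rw [hθ]; field_simp
  have h0n : 0 < n := hn
  haveI : Nonempty (Fin n) := ⟨⟨0, h0n⟩⟩
  -- determine lam
  have hAy := y_eig n hn
  rw [← hy] at hAy
  have hlam : lam = 2 * Real.cos θ := by
    have hdot : 0 < x ⬝ᵥ y := by
      apply Finset.sum_pos
      · intro i _; exact mul_pos (hx i) (hy_pos i)
      · exact Finset.univ_nonempty
    have h1 : x ⬝ᵥ ((SimpleGraph.pathGraph n).adjMatrix ℝ *ᵥ y)
        = ((SimpleGraph.pathGraph n).adjMatrix ℝ *ᵥ x) ⬝ᵥ y := by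
      rw [Matrix.dotProduct_mulVec, ← SimpleGraph.transpose_adjMatrix,
        Matrix.vecMul_transpose, SimpleGraph.transpose_adjMatrix]
    rw [hAy, heig, dotProduct_smul, smul_dotProduct, smul_eq_mul,
      smul_eq_mul] at h1
    exact (mul_right_cancel₀ (ne_of_gt hdot) h1.symm)
  -- recurrence for x
  have hrec : ∀ i : Fin n,
      pext x ((i:ℕ)+1) + (if (i:ℕ) = 0 then 0 else pext x ((i:ℕ)-1)) = lam * x i := by
    intro i
    rw [← path_mulVec, heig]
    simp
  set c : ℝ := x ⟨0, h0n⟩ / Real.sin θ with hc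
  have hcpos : 0 < c := div_pos (hx _) hsθ
  have main : ∀ k, ∀ h : k < n, x ⟨k, h⟩ = c * Real.sin (((k:ℝ)+1) * θ) := by
    intro k
    induction k using Nat.strong_induction_on with
    | _ k ih =>
      match k with
      | 0 =>
        intro h
        rw [hc]
        field_simp
        try norm_num
      | 1 =>
        intro h
        have h01 := hrec ⟨0, h0n⟩
        have hthis : pext x 1 = lam * x ⟨0, h0n⟩ := by simpa using h01
        rw [pext, dif_pos h] at hthis
        have hx0 : x ⟨0, h0n⟩ = c * Real.sin θ := by
          rw [hc]; field_simp
        have : x ⟨1, h⟩ = lam * x ⟨0, h0n⟩ := hthis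
        rw [this, hlam, hx0]
        push_cast
        rw [show ((1:ℝ)+1) * θ = 2*θ from by ring, Real.sin_two_mul]
        ring
      | (m+2) =>
        intro h
        have hm1 : m + 1 < n := by omega
        have hmn : m < n := by omega
        have := hrec ⟨m+1, hm1⟩
        rw [show ((⟨m+1, hm1⟩ : Fin n) : ℕ) = m + 1 from rfl] at this
        rw [if_neg (by omega)] at this
        rw [show m+1+1 = m+2 from rfl, show m+1-1 = m from rfl] at this
        rw [pext, dif_pos h, pext, dif_pos hmn] at this
        have e1 := ih m (by omega) hmn
        have e2 := ih (m+1) (by omega) hm1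
        have hx2 : x ⟨m+2, h⟩ = lam * x ⟨m+1, hm1⟩ - x ⟨m, hmn⟩ := by linarith [this]
        rw [hx2, hlam, e1, e2]
        have hss := _root_.sin_add_sin (((m:ℝ)+2) * θ) θ
        have f1 : ((m:ℝ)+2)*θ + θ = ((m:ℝ)+2+1)*θ := by ring
        have f2 : ((m:ℝ)+2)*θ - θ = ((m:ℝ)+1)*θ := by ring
        rw [f1, f2] at hss
        push_cast
        rw [show ((m:ℝ)+1+1)*θ = ((m:ℝ)+2)*θ from by ring]
        linear_combination -c * hss
  -- sums
  have hsum1 : ∑ i, x i = c * (Real.cos (θ/2) / Real.sin (θ/2)) := by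
    have : ∀ i : Fin n, x i = c * Real.sin ((((i:ℕ):ℝ)+1) * θ) := by
      intro i; have := main (i:ℕ) i.2; simpa using this
    rw [Finset.sum_congr rfl (fun i _ => this i), ← Finset.mul_sum]
    rw [Fin.sum_univ_eq_sum_range (fun k : ℕ => Real.sin (((k:ℝ)+1) * θ))]
    rw [sum_sin_eq n hn]
  have hsum2 : ∑ i, x i ^ 2 = c^2 * (((n:ℝ)+1)/2) := by
    have : ∀ i : Fin n, x i ^ 2 = c^2 * Real.sin ((((i:ℕ):ℝ)+1) * θ) ^ 2 := by
      intro i; have := main (i:ℕ) i.2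
      have h2 : x i = c * Real.sin ((((i:ℕ):ℝ)+1) * θ) := by simpa using this
      rw [h2]; ring
    rw [Finset.sum_congr rfl (fun i _ => this i), ← Finset.mul_sum]
    rw [Fin.sum_univ_eq_sum_range (fun k : ℕ => Real.sin (((k:ℝ)+1) * θ) ^ 2)]
    rw [sum_sin_sq_eq n hn]
  rw [hsum1, hsum2]
  have hsin2' : Real.sin θ = 2 * Real.sin (θ/2) * Real.cos (θ/2) := by
    rw [show θ = 2 * (θ/2) from by ring, Real.sin_two_mul]
    ring_nf
  have hcos2' : 1 - Real.cos θ = 2 * Real.sin (θ/2) ^ 2 := by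
    have h2 := Real.sin_sq_eq_half_sub (θ/2)
    rw [show 2*(θ/2) = θ from by ring] at h2
    linarith
  rw [hsin2', hcos2']
  have hsne : Real.sin (θ/2) ≠ 0 := ne_of_gt hs2
  have hcne : c ≠ 0 := ne_of_gt hcpos
  field_simp
end

section
/- Let D̂_n denote the 'bi-fork' tree on n ≥ 6 vertices: a path on n−4 vertices with two extra leaves attached at each endpoint (so each end vertex of the path has two pendant leaves). Then λ_{D̂_n} = 2 and Γ_{D̂_n} = (n−2)²/(n−3). -/
open Finset Matrix

/-- The "bi-fork" tree `D̂_n` on `n` vertices: a path on the vertices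
`0, 1, …, n−5` together with two extra leaves (`n−4`, `n−3`) attached at `0` and
two extra leaves (`n−2`, `n−1`) attached at `n−5`. -/
def biFork (n : ℕ) : SimpleGraph (Fin n) :=
  SimpleGraph.fromRel (fun a b =>
    (a.val + 1 = b.val ∧ b.val ≤ n - 5) ∨
    (a.val = 0 ∧ (b.val = n - 4 ∨ b.val = n - 3)) ∨
    (a.val = n - 5 ∧ (b.val = n - 2 ∨ b.val = n - 1)))


lemma biFork_adj (m : ℕ) (a b : Fin (m+6)) : (biFork (m+6)).Adj a b ↔
    a.val ≠ b.val ∧ ((a.val + 1 = b.val ∧ b.val ≤ m+1) ∨ (b.val + 1 = a.val ∧ a.val ≤ m+1) ∨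
    (a.val = 0 ∧ (b.val = m+2 ∨ b.val = m+3)) ∨ (b.val = 0 ∧ (a.val = m+2 ∨ a.val = m+3)) ∨
    (a.val = m+1 ∧ (b.val = m+4 ∨ b.val = m+5)) ∨ (b.val = m+1 ∧ (a.val = m+4 ∨ a.val = m+5))) := by
  simp only [biFork, SimpleGraph.fromRel_adj, ne_eq, Fin.ext_iff]
  constructor <;> rintro ⟨h1, h2⟩ <;> refine ⟨h1, ?_⟩ <;> omega

open scoped Classical

lemma nbA (m : ℕ) (j : Fin (m+6)) (hj : j.val = 0) :
    (biFork (m+6)).neighborFinset j =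
      {⟨1, by omega⟩, ⟨m+2, by omega⟩, ⟨m+3, by omega⟩} := by
  ext i
  simp only [SimpleGraph.mem_neighborFinset, biFork_adj, mem_insert, mem_singleton, Fin.ext_iff]
  omega

lemma nbB (m : ℕ) (j : Fin (m+6)) (v : ℕ) (h1 : 1 ≤ v) (h2 : v ≤ m) (hj : j.val = v) :
    (biFork (m+6)).neighborFinset j = {⟨v-1, by omega⟩, ⟨v+1, by omega⟩} := by
  ext i
  simp only [SimpleGraph.mem_neighborFinset, biFork_adj, mem_insert, mem_singleton, Fin.ext_iff]
  omega

lemma nbC (m : ℕ) (j : Fin (m+6)) (hj : j.val = m+1) :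
    (biFork (m+6)).neighborFinset j =
      {⟨m, by omega⟩, ⟨m+4, by omega⟩, ⟨m+5, by omega⟩} := by
  ext i
  simp only [SimpleGraph.mem_neighborFinset, biFork_adj, mem_insert, mem_singleton, Fin.ext_iff]
  omega

lemma nbD (m : ℕ) (j : Fin (m+6)) (hj : j.val = m+2 ∨ j.val = m+3) :
    (biFork (m+6)).neighborFinset j = {⟨0, by omega⟩} := by
  ext i
  simp only [SimpleGraph.mem_neighborFinset, biFork_adj, mem_singleton, Fin.ext_iff]
  omega

lemma nbE (m : ℕ) (j : Fin (m+6)) (hj : j.val = m+4 ∨ j.val = m+5) :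
    (biFork (m+6)).neighborFinset j = {⟨m+1, by omega⟩} := by
  ext i
  simp only [SimpleGraph.mem_neighborFinset, biFork_adj, mem_singleton, Fin.ext_iff]
  omega

lemma sum_triple {k : ℕ} (a b c : Fin k) (hab : a ≠ b) (hac : a ≠ c) (hbc : b ≠ c)
    (x : Fin k → ℝ) : ∑ i ∈ ({a, b, c} : Finset (Fin k)), x i = x a + x b + x c := by
  rw [Finset.sum_insert (by simp [hab, hac]), Finset.sum_pair hbc, add_assoc]

lemma sum_split (m : ℕ) (f : Fin (m+6) → ℝ) (c d : ℝ)
    (h1 : ∀ v (h : v < m+2), f ⟨v, by omega⟩ = c)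
    (h2 : ∀ v (h2 : m+2 ≤ v) (h' : v < m+6), f ⟨v, by omega⟩ = d) :
    ∑ i, f i = (m+2 : ℝ) * c + 4 * d := by
  obtain ⟨g, hgc, hgd, hsum⟩ : ∃ g : ℕ → ℝ, (∀ v, v < m+2 → g v = c) ∧
      (∀ v, m+2 ≤ v → v < m+6 → g v = d) ∧ ∑ i, f i = ∑ v ∈ Finset.range (m+6), g v := by
    refine ⟨fun v => if h : v < m+6 then f ⟨v, h⟩ else 0, ?_, ?_, ?_⟩
    · intro v hv; simp only []; rw [dif_pos (by omega : v < m+6)]; exact h1 v hv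
    · intro v hv hv'; simp only []; rw [dif_pos hv']; exact h2 v hv hv'
    · rw [← Fin.sum_univ_eq_sum_range]
      exact Finset.sum_congr rfl fun i _ => by rw [dif_pos i.isLt]
  rw [hsum, show m+6 = (m+2)+1+1+1+1 from by omega]
  rw [Finset.sum_range_succ, Finset.sum_range_succ, Finset.sum_range_succ,
    Finset.sum_range_succ]
  have hrest : ∑ v ∈ Finset.range (m+2), g v = (m+2 : ℝ) * c := by
    rw [Finset.sum_congr rfl (fun v hv => hgc v (Finset.mem_range.mp hv)),
      Finset.sum_const, Finset.card_range, nsmul_eq_mul]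
    push_cast; ring
  rw [hrest, hgd (m+2) (by omega) (by omega), hgd (m+2+1) (by omega) (by omega),
    hgd (m+2+1+1) (by omega) (by omega), hgd (m+2+1+1+1) (by omega) (by omega)]
  ring


/-- the reference eigenvector -/
def yvec (m : ℕ) : Fin (m+6) → ℝ := fun i => if i.val ≤ m+1 then 2 else 1

lemma yvec_apply (m a : ℕ) (h : a < m+6) : yvec m ⟨a, h⟩ = if a ≤ m+1 then 2 else 1 := rfl

lemma yvec_pos (m : ℕ) (i : Fin (m+6)) : 0 < yvec m i := by
  unfold yvec; split <;> norm_num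

open scoped Classical in
lemma yvec_eig (m : ℕ) : (biFork (m+6)).adjMatrix ℝ *ᵥ yvec m = (2:ℝ) • yvec m := by
  funext j
  rw [SimpleGraph.adjMatrix_mulVec_apply, Pi.smul_apply, smul_eq_mul]
  have hcase : j.val = 0 ∨ (1 ≤ j.val ∧ j.val ≤ m) ∨ j.val = m+1 ∨
      (j.val = m+2 ∨ j.val = m+3) ∨ (j.val = m+4 ∨ j.val = m+5) := by omega
  have hj : yvec m j = if j.val ≤ m+1 then 2 else 1 := rfl
  rcases hcase with h | ⟨h1, h2⟩ | h | h | h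
  · rw [nbA m j h, sum_triple _ _ _ (by simp only [ne_eq, Fin.ext_iff]; omega) (by simp only [ne_eq, Fin.ext_iff]; omega)
      (by simp only [ne_eq, Fin.ext_iff]; omega), yvec_apply, yvec_apply, yvec_apply, if_pos (by omega),
      if_neg (by omega), if_neg (by omega), hj, if_pos (by omega)]
    norm_num
  · rw [nbB m j j.val h1 h2 rfl, Finset.sum_pair (by simp only [ne_eq, Fin.ext_iff]; omega),
      yvec_apply, yvec_apply, if_pos (by omega), if_pos (by omega), hj, if_pos (by omega)]
    norm_num
  · rw [nbC m j h, sum_triple _ _ _ (by simp only [ne_eq, Fin.ext_iff]; omega) (by simp only [ne_eq, Fin.ext_iff]; omega)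
      (by simp only [ne_eq, Fin.ext_iff]; omega), yvec_apply, yvec_apply, yvec_apply, if_pos (by omega),
      if_neg (by omega), if_neg (by omega), hj, if_pos (by omega)]
    norm_num
  · rw [nbD m j h, Finset.sum_singleton, yvec_apply, if_pos (by omega), hj, if_neg (by omega)]
    norm_num
  · rw [nbE m j h, Finset.sum_singleton, yvec_apply, if_pos (by omega), hj, if_neg (by omega)]
    norm_num

open scoped Classical in
/-- For the bi-fork tree `D̂_n` (`n ≥ 6`) with positive (Perron) eigenvector `x`:
the top eigenvalue is `2` and `Γ_{D̂_n} = (n−2)²/(n−3)`. -/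
theorem stmt13 (n : ℕ) (hn : 6 ≤ n) (x : Fin n → ℝ) (hx : ∀ i, 0 < x i)
    (lam : ℝ) (heig : (biFork n).adjMatrix ℝ *ᵥ x = lam • x) :
    lam = 2 ∧
    (∑ i, x i) ^ 2 / (∑ i, x i ^ 2) = ((n : ℝ) - 2) ^ 2 / ((n : ℝ) - 3) := by
  obtain ⟨m, rfl⟩ : ∃ m, n = m + 6 := ⟨n - 6, by omega⟩
  -- eigen-equation per vertex
  have key : ∀ j, ∑ i ∈ (biFork (m+6)).neighborFinset j, x i = lam * x j := by
    intro j
    have h := congrFun heig j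
    rwa [SimpleGraph.adjMatrix_mulVec_apply, Pi.smul_apply, smul_eq_mul] at h
  -- lambda = 2 via the symmetric pairing with yvec
  have hdot : (0:ℝ) < yvec m ⬝ᵥ x := by
    refine Finset.sum_pos (fun i _ => mul_pos (yvec_pos m i) (hx i)) ⟨⟨0, by omega⟩, by simp⟩
  have hpair : (2:ℝ) * (yvec m ⬝ᵥ x) = lam * (yvec m ⬝ᵥ x) := by
    have h1 : ((biFork (m+6)).adjMatrix ℝ *ᵥ yvec m) ⬝ᵥ x =
        yvec m ⬝ᵥ ((biFork (m+6)).adjMatrix ℝ *ᵥ x) := by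
      rw [Matrix.dotProduct_mulVec, ← Matrix.mulVec_transpose,
        SimpleGraph.transpose_adjMatrix]
    rw [yvec_eig, heig] at h1
    simpa [smul_dotProduct, dotProduct_smul] using h1
  have hlam : lam = 2 := (mul_right_cancel₀ (ne_of_gt hdot) hpair).symm
  subst hlam
  refine ⟨rfl, ?_⟩
  -- shape of x
  set x0 : ℝ := x ⟨0, by omega⟩ with hx0
  have eD : ∀ (j : Fin (m+6)), j.val = m+2 ∨ j.val = m+3 → 2 * x j = x0 := by
    intro j hj; rw [← key j, nbD m j hj, Finset.sum_singleton]
  have eE : ∀ (j : Fin (m+6)), j.val = m+4 ∨ j.val = m+5 → 2 * x j = x ⟨m+1, by omega⟩ := by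
    intro j hj; rw [← key j, nbE m j hj, Finset.sum_singleton]
  have e0 : 2 * x0 = x ⟨1, by omega⟩ + x ⟨m+2, by omega⟩ + x ⟨m+3, by omega⟩ := by
    rw [← key ⟨0, by omega⟩, nbA m _ rfl, sum_triple _ _ _ (by simp only [ne_eq, Fin.ext_iff]; omega)
      (by simp only [ne_eq, Fin.ext_iff]; omega) (by simp only [ne_eq, Fin.ext_iff]; omega)]
  have hm2 : x ⟨m+2, by omega⟩ = x0 / 2 := by
    have := eD ⟨m+2, by omega⟩ (Or.inl rfl); linarith
  have hm3 : x ⟨m+3, by omega⟩ = x0 / 2 := by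
    have := eD ⟨m+3, by omega⟩ (Or.inr rfl); linarith
  have h1 : x ⟨1, by omega⟩ = x0 := by linarith
  have claim : ∀ v (hvm : v + 1 ≤ m + 1),
      x ⟨v, by omega⟩ = x0 ∧ x ⟨v+1, by omega⟩ = x0 := by
    intro v
    induction v with
    | zero => exact fun _ => ⟨rfl, h1⟩
    | succ v ih =>
      intro h
      obtain ⟨hv, hv1⟩ := ih (by omega)
      refine ⟨hv1, ?_⟩
      have hB := key ⟨v+1, by omega⟩
      rw [nbB m ⟨v+1, by omega⟩ (v+1) (by omega) (by omega) rfl,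
        Finset.sum_pair (by simp only [ne_eq, Fin.ext_iff]; omega)] at hB
      simp only [Nat.add_sub_cancel] at hB
      linarith
  have xall : ∀ v (h : v ≤ m+1), x ⟨v, by omega⟩ = x0 := by
    intro v h
    match v with
    | 0 => rfl
    | (w+1) => exact (claim w (by omega)).2
  have hm4 : x ⟨m+4, by omega⟩ = x0 / 2 := by
    have := eE ⟨m+4, by omega⟩ (Or.inl rfl); have h2 := xall (m+1) (by omega); linarith
  have hm5 : x ⟨m+5, by omega⟩ = x0 / 2 := by
    have := eE ⟨m+5, by omega⟩ (Or.inr rfl); have h2 := xall (m+1) (by omega); linarith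
  have hleaf : ∀ v (h2 : m+2 ≤ v) (h' : v < m+6), x ⟨v, by omega⟩ = x0 / 2 := by
    intro v hv hv'
    have : v = m+2 ∨ v = m+3 ∨ v = m+4 ∨ v = m+5 := by omega
    rcases this with h | h | h | h <;> subst h
    exacts [hm2, hm3, hm4, hm5]
  have hsum : ∑ i, x i = (m+2 : ℝ) * x0 + 4 * (x0/2) :=
    sum_split m x x0 (x0/2) (fun v h => xall v (by omega)) hleaf
  have hsumsq : ∑ i, x i ^ 2 = (m+2 : ℝ) * x0^2 + 4 * ((x0/2)^2) :=
    sum_split m (fun i => x i ^ 2) (x0^2) ((x0/2)^2)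
      (fun v h => by rw [xall v (by omega)])
      (fun v h h' => by rw [hleaf v h h'])
  have hx0pos : 0 < x0 := hx _
  rw [hsum, hsumsq]
  have hcast : ((m+6 : ℕ) : ℝ) = (m : ℝ) + 6 := by push_cast; ring
  rw [hcast]
  rw [div_eq_div_iff (by nlinarith) (by nlinarith)]
  ring
end

section
/- Let G be a finite connected graph with Perron vector x and master vertex o, and let H be an induced subgraph of G containing o and all neighbors of o. Let β > 1 with Γ(x|_H) ≥ β. If moreover every vertex v outside H satisfies x_v ≤ (2/(β−1))·Σ_{u ∈ V(H)} x_u, then Γ_G ≥ β. -/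
open Finset Matrix

/-- If `H` (vertex set `s`) contains the master vertex `o` and all its neighbors,
`Γ(x|_H) ≥ β > 1`, and `H` is `2/(β−1)`-heavy (every outside vertex `v` satisfies
`x v ≤ (2/(β−1))·Σ_{u∈s} x u`), then `Γ_G ≥ β`. -/
theorem stmt14 {V : Type*} [Fintype V] [DecidableEq V] (G : SimpleGraph V)
    [DecidableRel G.Adj] (hG : G.Connected) (x : V → ℝ) (hx : ∀ v, 0 < x v)
    (lam : ℝ) (heig : G.adjMatrix ℝ *ᵥ x = lam • x)
    (o : V) (ho : ∀ v, x v ≤ x o)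
    (s : Finset V) (hos : o ∈ s) (hnbr : ∀ v, G.Adj o v → v ∈ s)
    (β : ℝ) (hβ : 1 < β)
    (hΓH : (∑ u ∈ s, x u) ^ 2 / (∑ u ∈ s, x u ^ 2) ≥ β)
    (hheavy : ∀ v ∉ s, x v ≤ (2 / (β - 1)) * ∑ u ∈ s, x u) :
    (∑ v, x v) ^ 2 / (∑ v, x v ^ 2) ≥ β := by
  set S : ℝ := ∑ u ∈ s, x u with hS
  set Q : ℝ := ∑ u ∈ s, x u ^ 2 with hQ
  set T : ℝ := ∑ v ∈ sᶜ, x v with hT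
  set R : ℝ := ∑ v ∈ sᶜ, x v ^ 2 with hR
  have hQpos : 0 < Q :=
    Finset.sum_pos' (fun u _ => sq_nonneg _) ⟨o, hos, pow_pos (hx o) 2⟩
  have hSpos : 0 < S := Finset.sum_pos (fun u _ => hx u) ⟨o, hos⟩
  have hTnn : 0 ≤ T := Finset.sum_nonneg fun v _ => (hx v).le
  have hRnn : 0 ≤ R := Finset.sum_nonneg fun v _ => sq_nonneg _
  have hβQ : β * Q ≤ S ^ 2 := by
    rw [ge_iff_le, le_div_iff₀ hQpos] at hΓH
    linarith
  have hsum : (∑ v, x v) = S + T := (Finset.sum_add_sum_compl s x).symm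
  have hsum2 : (∑ v, x v ^ 2) = Q + R :=
    (Finset.sum_add_sum_compl s (fun v => x v ^ 2)).symm
  have hβ1 : 0 < β - 1 := by linarith
  have key : β * R ≤ 2 * S * T + T ^ 2 := by
    by_cases hc : T ≤ 2 / (β - 1) * S
    · have hRT : R ≤ T * T := by
        have h : R ≤ ∑ v ∈ sᶜ, x v * T := by
          refine Finset.sum_le_sum fun v hv => ?_
          have hvT : x v ≤ T :=
            Finset.single_le_sum (f := x) (fun u _ => (hx u).le) hv
          nlinarith [(hx v).le]
        rwa [← Finset.sum_mul, ← hT] at h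
      have h2 : (β - 1) * T ≤ 2 * S := by
        have h3 := mul_le_mul_of_nonneg_left hc hβ1.le
        have h4 : (β - 1) * (2 / (β - 1) * S) = 2 * S := by field_simp
        linarith
      nlinarith
    · push_neg at hc
      have hRT : R ≤ (2 / (β - 1) * S) * T := by
        rw [hR, hT, Finset.mul_sum]
        refine Finset.sum_le_sum fun v hv => ?_
        have h1 : x v ≤ 2 / (β - 1) * S := hheavy v (by simpa using hv)
        nlinarith [(hx v).le]
      have h2 : (β - 1) * (2 / (β - 1) * S) = 2 * S := by
        field_simp
      nlinarith [mul_le_mul_of_nonneg_left hc.le hβ1.le,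
        mul_le_mul_of_nonneg_left hRT (by linarith : (0:ℝ) ≤ β)]
  rw [hsum, hsum2, ge_iff_le, le_div_iff₀ (by linarith)]
  nlinarith
end

section
/- Let G be a finite connected graph with master vertex o and let H be any induced subgraph containing the closed neighborhood N_G[o]. Then Γ_G ≥ min(Γ(x|_H), 2λ_G + 3), where x is the Perron vector of G. -/
open Finset Matrix

/-- If the vertex set `s` of an induced subgraph `H` contains the closed neighborhood
of the master vertex `o`, then `Γ_G ≥ min (Γ(x|_H)) (2λ_G + 3)`. -/
theorem stmt15 {V : Type*} [Fintype V] [DecidableEq V] (G : SimpleGraph V)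
    [DecidableRel G.Adj] (hG : G.Connected) (x : V → ℝ) (hx : ∀ v, 0 < x v)
    (lam : ℝ) (heig : G.adjMatrix ℝ *ᵥ x = lam • x)
    (o : V) (ho : ∀ v, x v ≤ x o)
    (s : Finset V) (hos : o ∈ s) (hnbr : ∀ v, G.Adj o v → v ∈ s) :
    (∑ v, x v) ^ 2 / (∑ v, x v ^ 2) ≥
      min ((∑ u ∈ s, x u) ^ 2 / (∑ u ∈ s, x u ^ 2)) (2 * lam + 3) := by
  rw [ge_iff_le]
  set a := ∑ u ∈ s, x u with ha_def
  set c := ∑ u ∈ s, x u ^ 2 with hc_def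
  set T := ∑ v ∈ sᶜ, x v with hT_def
  set R := ∑ v ∈ sᶜ, x v ^ 2 with hR_def
  have hsum : ∑ v, x v = a + T := (Finset.sum_add_sum_compl s x).symm
  have hsum2 : ∑ v, x v ^ 2 = c + R := (Finset.sum_add_sum_compl s _).symm
  rw [hsum, hsum2]
  have hxo : 0 < x o := hx o
  have ha : 0 < a := Finset.sum_pos (fun v _ => hx v) ⟨o, hos⟩
  have hc : 0 < c := Finset.sum_pos (fun v _ => pow_pos (hx v) 2) ⟨o, hos⟩
  by_cases hcompl : sᶜ = (∅ : Finset V)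
  · have hT0 : T = 0 := by rw [hT_def, hcompl, Finset.sum_empty]
    have hR0 : R = 0 := by rw [hR_def, hcompl, Finset.sum_empty]
    rw [hT0, hR0, add_zero, add_zero]
    exact min_le_left _ _
  · obtain ⟨w, hw⟩ := Finset.nonempty_of_ne_empty hcompl
    have hT : 0 < T := Finset.sum_pos (fun v _ => hx v) ⟨w, hw⟩
    have hR : 0 < R := Finset.sum_pos (fun v _ => pow_pos (hx v) 2) ⟨w, hw⟩
    have hcR : 0 < c + R := by linarith
    -- eigenvalue equation at o
    have heo : ∑ u ∈ G.neighborFinset o, x u = lam * x o := by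
      have h := congrFun heig o
      rw [SimpleGraph.adjMatrix_mulVec_apply] at h
      simpa using h
    have hlam : 0 ≤ lam := by
      have h0 : 0 ≤ lam * x o := by
        rw [← heo]; exact Finset.sum_nonneg fun v _ => (hx v).le
      nlinarith
    -- a ≥ (lam + 1) * x o
    have ha2 : (lam + 1) * x o ≤ a := by
      have hsub : insert o (G.neighborFinset o) ⊆ s := by
        intro u hu
        rcases Finset.mem_insert.mp hu with h | h
        · exact h ▸ hos
        · exact hnbr u (G.mem_neighborFinset o u |>.mp h)
      have hle : ∑ u ∈ insert o (G.neighborFinset o), x u ≤ a :=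
        Finset.sum_le_sum_of_subset_of_nonneg hsub (fun v _ _ => (hx v).le)
      rw [Finset.sum_insert (by simp), heo] at hle
      linarith
    -- R ≤ x o * T
    have hR1 : R ≤ x o * T := by
      rw [hR_def, hT_def, Finset.mul_sum]
      refine Finset.sum_le_sum fun v _ => ?_
      have h1 := hx v; have h2 := ho v; nlinarith
    -- R ≤ T ^ 2
    have hR2 : R ≤ T ^ 2 := by
      have : R ≤ ∑ v ∈ sᶜ, x v * T := by
        refine Finset.sum_le_sum fun v hv => ?_
        have hvT : x v ≤ T :=
          Finset.single_le_sum (fun u _ => (hx u).le) hv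
        nlinarith [hx v]
      rw [← Finset.sum_mul] at this
      calc R ≤ T * T := this
        _ = T ^ 2 := (sq T).symm
    have key : (2 * lam + 3) * R ≤ T * (2 * a + T) := by
      nlinarith [mul_le_mul_of_nonneg_left hR1 (by linarith : (0:ℝ) ≤ 2 * lam + 2),
        mul_le_mul_of_nonneg_right ha2 hT.le, hR2]
    have hkey : 2 * lam + 3 ≤ T * (2 * a + T) / R := by
      rw [le_div_iff₀ hR]; linarith
    rcases le_or_gt (a ^ 2 / c) (T * (2 * a + T) / R) with h | h
    · have h' : a ^ 2 * R ≤ c * (T * (2 * a + T)) := by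
        rw [div_le_div_iff₀ hc hR] at h; linarith
      have h2 : a ^ 2 / c ≤ (a + T) ^ 2 / (c + R) := by
        rw [div_le_div_iff₀ hc hcR]; nlinarith
      exact le_trans (min_le_left _ _) h2
    · have h' : c * (T * (2 * a + T)) ≤ a ^ 2 * R := by
        rw [div_lt_div_iff₀ hR hc] at h; nlinarith
      have h2 : T * (2 * a + T) / R ≤ (a + T) ^ 2 / (c + R) := by
        rw [div_le_div_iff₀ hR hcR]; nlinarith
      exact le_trans (min_le_right _ _) (le_trans hkey h2)
end

section
/- Let G be a finite connected graph with master vertex o of degree d, and let H = N_G[o] be the closed neighborhood of o. Then Γ(x|_H) ≥ λ_G / (1 − (d+1)/(λ_G+1)²), where x is the Perron vector of G. In particular Γ(x|_H) ≥ β_d := min_{λ ∈ [√d, d]} λ/(1 − (d+1)/(λ+1)²). -/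
open Finset Matrix

/-- For the closed neighborhood `H = N_G[o]` of the master vertex `o` of degree `d`,
`Γ(x|_H) ≥ λ_G / (1 − (d+1)/(λ_G+1)²)`; in particular
`Γ(x|_H) ≥ β_d = min_{μ ∈ [√d, d]} μ/(1 − (d+1)/(μ+1)²)`. -/
theorem stmt16 {V : Type*} [Fintype V] [DecidableEq V] (G : SimpleGraph V)
    [DecidableRel G.Adj] (hG : G.Connected) (x : V → ℝ) (hx : ∀ v, 0 < x v)
    (lam : ℝ) (heig : G.adjMatrix ℝ *ᵥ x = lam • x)
    (o : V) (ho : ∀ v, x v ≤ x o) (d : ℕ) (hd : d = G.degree o) :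
    (∑ u ∈ insert o (G.neighborFinset o), x u) ^ 2 /
        (∑ u ∈ insert o (G.neighborFinset o), x u ^ 2) ≥
      lam / (1 - ((d : ℝ) + 1) / (lam + 1) ^ 2) ∧
    (∑ u ∈ insert o (G.neighborFinset o), x u) ^ 2 /
        (∑ u ∈ insert o (G.neighborFinset o), x u ^ 2) ≥
      sInf ((fun μ : ℝ => μ / (1 - ((d : ℝ) + 1) / (μ + 1) ^ 2)) ''
        Set.Icc (Real.sqrt d) (d : ℝ)) := by
  classical
  have hno : o ∉ G.neighborFinset o := SimpleGraph.notMem_neighborFinset_self G o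
  have heigv : ∀ v, ∑ w ∈ G.neighborFinset v, x w = lam * x v := by
    intro v
    have h := congrFun heig v
    simpa [SimpleGraph.adjMatrix_mulVec_apply] using h
  have hxo : 0 < x o := hx o
  have hcard : (G.neighborFinset o).card = d := by
    rw [hd]; rfl
  rcases Nat.eq_zero_or_pos d with hd0 | hdpos
  · -- degenerate case d = 0
    subst hd0
    have hempty : G.neighborFinset o = ∅ := Finset.card_eq_zero.mp hcard
    have hlam : lam = 0 := by
      have h := heigv o
      rw [hempty] at h
      simp only [Finset.sum_empty] at h
      have := mul_eq_zero.mp h.symm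
      rcases this with h' | h'
      · exact h'
      · exact absurd h' hxo.ne'
    constructor
    · rw [hempty, hlam]
      norm_num [hxo.ne']
    · rw [hempty]
      simp only [Nat.cast_zero, Real.sqrt_zero, Set.Icc_self, Set.image_singleton,
        csInf_singleton]
      norm_num [hxo.ne']
  -- main case d ≥ 1
  have hd1 : (1:ℝ) ≤ (d:ℝ) := by exact_mod_cast hdpos
  have hsum : ∑ u ∈ insert o (G.neighborFinset o), x u = (lam + 1) * x o := by
    rw [Finset.sum_insert hno, heigv o]; ring
  -- lam ≤ d
  have hlamd : lam ≤ (d:ℝ) := by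
    have h : lam * x o ≤ (d:ℝ) * x o := by
      rw [← heigv o]
      calc ∑ u ∈ G.neighborFinset o, x u ≤ ∑ _u ∈ G.neighborFinset o, x o :=
            Finset.sum_le_sum (fun u _ => ho u)
        _ = (d:ℝ) * x o := by rw [Finset.sum_const, hcard, nsmul_eq_mul]
    exact le_of_mul_le_mul_right h hxo
  have hmem : ∀ u ∈ G.neighborFinset o, o ∈ G.neighborFinset u := by
    intro u hu
    rw [SimpleGraph.mem_neighborFinset] at hu ⊢
    exact hu.symm
  have step : ∀ u ∈ G.neighborFinset o, x o ≤ lam * x u := by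
    intro u hu
    rw [← heigv u]
    exact Finset.single_le_sum (fun w _ => (hx w).le) (hmem u hu)
  have hdlam2 : (d:ℝ) ≤ lam ^ 2 := by
    have key : (d:ℝ) * x o ≤ lam ^ 2 * x o := by
      have h1 : (d:ℝ) * x o = ∑ _u ∈ G.neighborFinset o, x o := by
        rw [Finset.sum_const, hcard, nsmul_eq_mul]
      have h2 : ∑ u ∈ G.neighborFinset o, lam * x u = lam ^ 2 * x o := by
        rw [← Finset.mul_sum, heigv o]; ring
      rw [h1, ← h2]
      exact Finset.sum_le_sum step
    exact le_of_mul_le_mul_right key hxo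
  have hlam_pos : 0 < lam := by
    have hne : (G.neighborFinset o).Nonempty := by
      rw [← Finset.card_pos, hcard]; exact hdpos
    have hpos : 0 < ∑ w ∈ G.neighborFinset o, x w :=
      Finset.sum_pos (fun w _ => hx w) hne
    rw [heigv o] at hpos
    nlinarith
  have hlam1 : 1 ≤ lam := by nlinarith
  -- pointwise bounds on S
  have hlb : ∀ v ∈ insert o (G.neighborFinset o), x o / lam ≤ x v := by
    intro v hv
    rw [div_le_iff₀ hlam_pos]
    rcases Finset.mem_insert.mp hv with rfl | hv'
    · nlinarith
    · have := step v hv'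
      linarith [mul_comm lam (x v)]
  have hsq : ∀ v ∈ insert o (G.neighborFinset o),
      x v ^ 2 ≤ (x o / lam + x o) * x v - (x o / lam) * x o := by
    intro v hv
    have h1 := hlb v hv
    have h2 := ho v
    nlinarith
  have hcardS : (insert o (G.neighborFinset o)).card = d + 1 := by
    rw [Finset.card_insert_of_notMem hno, hcard]
  have hden_pos : 0 < (lam + 1) ^ 2 - ((d:ℝ) + 1) := by nlinarith
  have hQ : ∑ v ∈ insert o (G.neighborFinset o), x v ^ 2 ≤
      x o ^ 2 * ((lam + 1) ^ 2 - ((d:ℝ) + 1)) / lam := by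
    calc ∑ v ∈ insert o (G.neighborFinset o), x v ^ 2
        ≤ ∑ v ∈ insert o (G.neighborFinset o),
            ((x o / lam + x o) * x v - (x o / lam) * x o) := Finset.sum_le_sum hsq
      _ = (x o / lam + x o) * ∑ v ∈ insert o (G.neighborFinset o), x v -
            ((insert o (G.neighborFinset o)).card : ℝ) * ((x o / lam) * x o) := by
          rw [Finset.sum_sub_distrib, ← Finset.mul_sum, Finset.sum_const, nsmul_eq_mul]
      _ = x o ^ 2 * ((lam + 1) ^ 2 - ((d:ℝ) + 1)) / lam := by
          rw [hsum, hcardS]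
          push_cast
          field_simp
          ring
  have hSq_pos : 0 < ∑ v ∈ insert o (G.neighborFinset o), x v ^ 2 :=
    Finset.sum_pos (fun v _ => pow_pos (hx v) 2) ⟨o, Finset.mem_insert_self _ _⟩
  have part1 : (∑ u ∈ insert o (G.neighborFinset o), x u) ^ 2 /
        (∑ u ∈ insert o (G.neighborFinset o), x u ^ 2) ≥
      lam / (1 - ((d : ℝ) + 1) / (lam + 1) ^ 2) := by
    have hrw : lam / (1 - ((d : ℝ) + 1) / (lam + 1) ^ 2) =
        ((lam + 1) * x o) ^ 2 / (x o ^ 2 * ((lam + 1) ^ 2 - ((d:ℝ) + 1)) / lam) := by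
      rw [div_eq_div_iff]
      · field_simp
      · have h1 : 0 < ((d:ℝ)+1) / (lam+1)^2 := by positivity
        have h2 : ((d:ℝ)+1) / (lam+1)^2 < 1 := by
          rw [div_lt_one (by positivity)]
          linarith
        linarith
      · positivity
    rw [hsum, hrw]
    apply div_le_div_of_nonneg_left _ hSq_pos hQ
    positivity
  refine ⟨part1, ?_⟩
  have hsqrt : Real.sqrt (d:ℝ) ≤ lam := by
    rw [show lam = Real.sqrt (lam ^ 2) from (Real.sqrt_sq hlam_pos.le).symm]
    exact Real.sqrt_le_sqrt hdlam2
  have hbdd : BddBelow ((fun μ : ℝ => μ / (1 - ((d : ℝ) + 1) / (μ + 1) ^ 2)) ''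
      Set.Icc (Real.sqrt d) (d : ℝ)) := by
    refine ⟨0, ?_⟩
    rintro y ⟨μ, ⟨hμ1, hμ2⟩, rfl⟩
    have hμ0 : 0 ≤ μ := le_trans (Real.sqrt_nonneg _) hμ1
    have hμsq : (d:ℝ) ≤ μ ^ 2 := by
      have := Real.sq_sqrt (by positivity : (0:ℝ) ≤ (d:ℝ))
      nlinarith [Real.sqrt_nonneg (d:ℝ)]
    have hden : 0 ≤ 1 - ((d : ℝ) + 1) / (μ + 1) ^ 2 := by
      have h2 : ((d:ℝ)+1) / (μ+1)^2 ≤ 1 := by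
        rw [div_le_one (by positivity)]
        nlinarith [Real.sqrt_nonneg (d:ℝ), Real.sq_sqrt (show (0:ℝ) ≤ (d:ℝ) by positivity),
          hμ1]
      linarith
    positivity
  have hmemI : lam ∈ Set.Icc (Real.sqrt (d:ℝ)) (d:ℝ) := ⟨hsqrt, hlamd⟩
  exact le_trans (csInf_le hbdd (Set.mem_image_of_mem _ hmemI)) part1
end

section
/- Let H be an induced subgraph of a finite connected graph G containing the master vertex o and all of its neighbors. Then there is no vertex v ∈ V(H)\{o} with N_H[v] ⊋ N_H[o], i.e., no other vertex of H strictly dominates o in closed neighborhoods within H. -/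
open Finset Matrix

/-- If the vertex set `s` of an induced subgraph `H` of `G` contains the master
vertex `o` and all its neighbors, then no other vertex `v` of `H` satisfies
`N_H[v] ⊋ N_H[o]` (closed neighborhoods taken within the induced subgraph). -/
theorem stmt17 {V : Type*} [Fintype V] [DecidableEq V] (G : SimpleGraph V)
    [DecidableRel G.Adj] (hG : G.Connected) (x : V → ℝ) (hx : ∀ v, 0 < x v)
    (lam : ℝ) (heig : G.adjMatrix ℝ *ᵥ x = lam • x)
    (o : V) (ho : ∀ v, x v ≤ x o)
    (s : Finset V) (hos : o ∈ s) (hnbr : ∀ v, G.Adj o v → v ∈ s) :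
    ¬ ∃ v ∈ s, v ≠ o ∧
      {u | u ∈ s ∧ (u = o ∨ G.Adj o u)} ⊂ {u | u ∈ s ∧ (u = v ∨ G.Adj v u)} := by
  rintro ⟨v, hvs, hvo, hsub⟩
  have hAB : {u | u ∈ s ∧ (u = o ∨ G.Adj o u)} ⊆ {u | u ∈ s ∧ (u = v ∨ G.Adj v u)} :=
    hsub.1
  have hoR : o ∈ {u | u ∈ s ∧ (u = v ∨ G.Adj v u)} := hAB ⟨hos, Or.inl rfl⟩
  have hadj : G.Adj v o := hoR.2.resolve_left (fun h => hvo h.symm)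
  obtain ⟨w, hwB, hwA⟩ := Set.exists_of_ssubset hsub
  have hwv : w ≠ v := fun h => hwA (by rw [h]; exact ⟨hvs, Or.inr hadj.symm⟩)
  have hadjvw : G.Adj v w := hwB.2.resolve_left hwv
  have hws : w ∈ s := hwB.1
  have hwno : ¬ G.Adj o w := fun h => hwA ⟨hws, Or.inr h⟩
  have hwo : w ≠ o := fun h => hwA ⟨hws, Or.inl h⟩
  have heigo : ∑ u ∈ G.neighborFinset o, x u = lam * x o := by
    have := congrFun heig o
    simpa [SimpleGraph.adjMatrix_mulVec_apply] using this
  have heigv : ∑ u ∈ G.neighborFinset v, x u = lam * x v := by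
    have := congrFun heig v
    simpa [SimpleGraph.adjMatrix_mulVec_apply] using this
  have hlam : 0 ≤ lam := by
    have h1 : 0 ≤ ∑ u ∈ G.neighborFinset o, x u :=
      Finset.sum_nonneg fun u _ => (hx u).le
    nlinarith [hx o]
  set S : Finset V := insert o (insert w ((G.neighborFinset o).erase v)) with hS
  have hSsub : S ⊆ G.neighborFinset v := by
    intro u hu
    simp only [hS, Finset.mem_insert, Finset.mem_erase, SimpleGraph.mem_neighborFinset] at hu ⊢
    rcases hu with rfl | rfl | ⟨huv, hou⟩
    · exact hadj
    · exact hadjvw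
    · have hus : u ∈ s := hnbr u hou
      have : u ∈ {u | u ∈ s ∧ (u = v ∨ G.Adj v u)} := hAB ⟨hus, Or.inr hou⟩
      exact this.2.resolve_left huv
  have hvmem : v ∈ G.neighborFinset o := (SimpleGraph.mem_neighborFinset _ _ _).2 hadj.symm
  have honotin : o ∉ insert w ((G.neighborFinset o).erase v) := by
    simp only [Finset.mem_insert, Finset.mem_erase, SimpleGraph.mem_neighborFinset]
    push_neg
    exact ⟨hwo.symm, fun _ => G.irrefl⟩
  have hwnotin : w ∉ (G.neighborFinset o).erase v := by
    simp only [Finset.mem_erase, SimpleGraph.mem_neighborFinset]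
    exact fun h => hwno h.2
  have hsum : ∑ u ∈ S, x u = x o + (x w + (lam * x o - x v)) := by
    rw [hS, Finset.sum_insert honotin, Finset.sum_insert hwnotin,
      Finset.sum_erase_eq_sub hvmem, heigo]
  have hle : ∑ u ∈ S, x u ≤ ∑ u ∈ G.neighborFinset v, x u :=
    Finset.sum_le_sum_of_subset_of_nonneg hSsub (fun i _ _ => (hx i).le)
  rw [hsum, heigv] at hle
  nlinarith [hx w, ho v, mul_nonneg hlam (sub_nonneg.2 (ho v))]
end
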